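/- arXiv:2209.00938 — 2 statements merged into one kernel-verified Lean document; each statement's English description precedes it below -/
import Mathlib

section
/- For each real m ≥ 0 and all integers ξ, η ≥ 0: a₂(ξ−η+1, ξ+η+1, m, 1, u₁) = ((−1)^{ξ+1}/(1+m²)^{(ξ+η)/2}) · Σ_{j=0}^{⌊ξ/2⌋} ( C(⌊η/2⌋, j)·(1+m²)^{δ₂(ξη)} − C(⌊(η−1)/2⌋, j)·(1+m²)^{δ₂(ξ(η+1))} ) · C(⌊ξ/2⌋, j) · (1 − (1+m²)²)^j. -/
open scoped BigOperators

/-- Direction of a checker move encoded by a Boolean: `true` = upwards-right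
(vector `(ε,ε)`), `false` = upwards-left (vector `(-ε,ε)`). -/
def dirZ (b : Bool) : ℤ := if b then 1 else -1

/-- The `k`-th direction of a path with `n` moves (dummy value `false` out of range). -/
def extd {n : ℕ} (d : Fin n → Bool) (k : ℕ) : Bool := if h : k < n then d ⟨k, h⟩ else false

/-- The (integer) space coordinate of a checker path after `k` moves. -/
def pathPos {n : ℕ} (d : Fin n → Bool) (k : ℕ) : ℤ := ∑ i ∈ Finset.range k, dirZ (extd d i)

/-- The number of turns of a checker path. -/
def pathTurns {n : ℕ} (d : Fin n → Bool) : ℕ :=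
  ((Finset.range n).filter (fun k => 0 < k ∧ extd d (k - 1) ≠ extd d k)).card

/-- Feynman checkers wave function `a(x,t,m,ε,u)` in an external field `u`, where the field
`u` is given as a function of the midpoint of an auxiliary edge. -/
noncomputable def kwf (m ε : ℝ) (u : ℝ → ℝ → ℝ) (x t : ℝ) : ℂ :=
  (((1 + m ^ 2 * ε ^ 2) ^ ((1 - t / ε) / 2) : ℝ) : ℂ) * Complex.I *
    ∑ d ∈ Finset.univ.filter
        (fun d : Fin ((⌊t / ε⌋).toNat) → Bool =>
          extd d 0 = true ∧ pathPos d ((⌊t / ε⌋).toNat) = ⌊x / ε⌋),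
      (-(Complex.I) * (m * ε)) ^ (pathTurns d) *
        ∏ k ∈ Finset.range ((⌊t / ε⌋).toNat),
          ((u (ε * pathPos d k + ε * (dirZ (extd d k)) / 2) (ε * k + ε / 2) : ℝ) : ℂ)

/-- `a₁(x,t,m,ε,u)`: the real part of the wave function. -/
noncomputable def ka1 (m ε : ℝ) (u : ℝ → ℝ → ℝ) (x t : ℝ) : ℝ := (kwf m ε u x t).re

/-- `a₂(x,t,m,ε,u)`: the imaginary part of the wave function. -/
noncomputable def ka2 (m ε : ℝ) (u : ℝ → ℝ → ℝ) (x t : ℝ) : ℝ := (kwf m ε u x t).im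

/-- `P(x,t,m,ε,u)`: the probability to find the electron at `(x,t)`. -/
noncomputable def kP (m ε : ℝ) (u : ℝ → ℝ → ℝ) (x t : ℝ) : ℝ := ‖kwf m ε u x t‖ ^ 2

/- The homogeneous electromagnetic field `u_ε`, as a function of the midpoint `(X,T)`
of an auxiliary edge: for `(x,t) ∈ εℤ²`, `u_ε(x+ε/2, t+ε/2) = -1` iff `(t-x)/(4ε) ∈ ℤ`. -/
open Classical in
noncomputable def uhom (ε : ℝ) : ℝ → ℝ → ℝ := fun X T =>
  if ∃ k : ℤ, T - X = 4 * ε * k then -1 else 1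
/-- Extended binomial coefficient: `C(a,b) = 0` if `a < 0` or `b < 0`. -/
def zchoose (a b : ℤ) : ℤ := if 0 ≤ a ∧ 0 ≤ b then (a.toNat).choose (b.toNat) else 0

/-- Bessel function of the first kind of order 0 (power series). -/
noncomputable def besselJ0 (z : ℝ) : ℝ :=
  ∑' j : ℕ, (-1 : ℝ) ^ j * (z / 2) ^ (2 * j) / ((j.factorial : ℝ)) ^ 2

/-- Bessel function of the first kind of order 1 (power series). -/
noncomputable def besselJ1 (z : ℝ) : ℝ :=
  ∑' j : ℕ, (-1 : ℝ) ^ j * (z / 2) ^ (2 * j + 1) / ((j.factorial : ℝ) * ((j + 1).factorial : ℝ))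

/-- Truncated hypergeometric sum `₂F₁(a,b;c;z)` with integer parameters,
summed for `k = 0, …, K`. -/
noncomputable def hypF (a b c : ℤ) (K : ℕ) (z : ℝ) : ℝ :=
  ∑ k ∈ Finset.range (K + 1),
    (∏ l ∈ Finset.range k, (((a + l) * (b + l) : ℤ) : ℝ) / (((1 + l) * (c + l) : ℤ) : ℝ)) * z ^ k

/-- `ω_p = (1/(2ε))·arcsin(sin(2pε)/(1+m²ε²))`. -/
noncomputable def omg (m ε p : ℝ) : ℝ :=
  (1 / (2 * ε)) * Real.arcsin (Real.sin (2 * p * ε) / (1 + m ^ 2 * ε ^ 2))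

/-- `(-1)^q` for a real exponent `q`, with the convention `(-1)^(n/2) = iⁿ`:
`neg1pow q = exp(iπq)`. -/
noncomputable def neg1pow (q : ℝ) : ℂ := Complex.exp (Complex.I * Real.pi * q)

/-- The Airy function `Ai(λ) = (1/π)·lim_{R→∞} ∫₀^R cos(y³/3 + λy) dy`. -/
noncomputable def AiryAi (lam : ℝ) : ℝ :=
  (1 / Real.pi) *
    Filter.limUnder Filter.atTop (fun R : ℝ => ∫ y in (0 : ℝ)..R, Real.cos (y ^ 3 / 3 + lam * y))

/-- The function `θ̃(v)` from Theorem `Airy` of the paper. -/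
noncomputable def thetaTilde (m ε v : ℝ) : ℝ :=
  (1 / (2 * ε)) *
    (|v| * Real.arccos (|v| * Real.sqrt ((1 + m ^ 2 * ε ^ 2) ^ 2 - 1) / Real.sqrt (1 - v ^ 2)) -
      Real.arccos (Real.sqrt ((1 + m ^ 2 * ε ^ 2) ^ 2 - 1) /
        ((1 + m ^ 2 * ε ^ 2) * Real.sqrt (1 - v ^ 2))))

/-!
Split each path sum by the direction of the last move. Removing that move gives the lattice Dirac
equation in the field `u` (`pathSum_succ`): the sum over paths reaching `x` by a move in
direction `b` is the value of `u` on that last edge times the sum over paths reaching the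
previous point by the same move, plus `-im` times the sum over those reaching it by the other
move. For the homogeneous field the edge value is `-(-1)^η` on the upwards-right edge into
`(ξ - η + 1, ξ + η + 1)` and `1` on the upwards-left one, so the two path sums obey a
first-order recurrence in `ξ` and one in `η`. The closed forms satisfy the same recurrences and
boundary values; once parities are sorted out, the only non-trivial identity is that the mixed
second difference of `∑_j C(a, j) C(g, j) z^j` in `a` and `g` equals `z` times the sum, by
Pascal's rule in both arguments.
-/

open Finset

lemma pow_mod_two_eq_ite {R : Type*} [Monoid R] (x : R) (n : ℕ) :
    x ^ (n % 2) = if Even n then 1 else x := by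
  rcases Nat.even_or_odd n with h | h
  · simp [Nat.even_iff.mp h, h]
  · simp [Nat.odd_iff.mp h, Nat.not_even_iff_odd.mpr h]

lemma zchoose_natCast (a b : ℕ) : zchoose a b = a.choose b := by
  simp [zchoose]

lemma zchoose_of_neg {a : ℤ} (ha : a < 0) (b : ℤ) : zchoose a b = 0 := by
  simp [zchoose, ha.not_ge]

lemma zchoose_add_one_add_one (a : ℤ) (j : ℕ) :
    zchoose (a + 1) ((j : ℤ) + 1) = zchoose a j + zchoose a ((j : ℤ) + 1) := by
  rcases lt_or_ge a 0 with ha | ha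
  · rw [zchoose_of_neg ha, zchoose_of_neg ha, add_zero]
    rcases (Int.add_one_le_of_lt ha).lt_or_eq with ha' | ha'
    · exact zchoose_of_neg ha' _
    · simpa [ha'] using zchoose_natCast 0 (j + 1)
  · lift a to ℕ using ha
    simp only [← Nat.cast_succ, zchoose_natCast, Nat.choose_succ_succ, Nat.cast_add]

noncomputable def zchooseSum (z : ℝ) (a : ℤ) (g : ℕ) : ℝ :=
  ∑ j ∈ range (g + 1), (zchoose a j : ℝ) * (g.choose j : ℝ) * z ^ j

lemma zchooseSum_of_neg (z : ℝ) {a : ℤ} (ha : a < 0) (g : ℕ) : zchooseSum z a g = 0 := by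
  simp [zchooseSum, zchoose_of_neg ha]

lemma zchooseSum_zero_right (z : ℝ) {a : ℤ} (ha : 0 ≤ a) : zchooseSum z a 0 = 1 := by
  simp [zchooseSum, zchoose, ha]

lemma zchooseSum_succ_sub (z : ℝ) (a : ℤ) (g : ℕ) :
    zchooseSum z a (g + 1) - zchooseSum z a g
      = ∑ i ∈ range (g + 1),
          (zchoose a ((i : ℤ) + 1) : ℝ) * (g.choose i : ℝ) * z ^ (i + 1) := by
  have hg : zchooseSum z a g
      = ∑ i ∈ range (g + 1),
          (zchoose a ((i : ℤ) + 1) : ℝ) * (g.choose (i + 1) : ℝ) * z ^ (i + 1)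
        + zchoose a 0 := by
    rw [zchooseSum, sum_range_succ', sum_range_succ _ g, Nat.choose_succ_self]
    simp
  rw [hg, zchooseSum, sum_range_succ' _ (g + 1)]
  simp only [Nat.choose_succ_succ', Nat.choose_zero_right, Nat.cast_add, Nat.cast_one,
    Nat.cast_zero, pow_zero, mul_one]
  rw [add_sub_add_right_eq_sub, ← sum_sub_distrib]
  exact sum_congr rfl fun i _ => by ring

lemma zchooseSum_mixed_diff (z : ℝ) (a : ℤ) (g : ℕ) :
    zchooseSum z (a + 1) (g + 1) - zchooseSum z a (g + 1) - zchooseSum z (a + 1) g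
      + zchooseSum z a g = z * zchooseSum z a g := by
  calc _ = (zchooseSum z (a + 1) (g + 1) - zchooseSum z (a + 1) g)
          - (zchooseSum z a (g + 1) - zchooseSum z a g) := by ring
    _ = ∑ i ∈ range (g + 1), (zchoose a i : ℝ) * (g.choose i : ℝ) * z ^ (i + 1) := by
      rw [zchooseSum_succ_sub, zchooseSum_succ_sub, ← sum_sub_distrib]
      refine sum_congr rfl fun i _ => ?_
      rw [zchoose_add_one_add_one, Int.cast_add]
      ring
    _ = z * zchooseSum z a g := by
      rw [zchooseSum, mul_sum]
      exact sum_congr rfl fun i _ => by ring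

section ClosedForm

variable (m : ℝ)

/-- `closedA2 m ξ η` and `closedA1 m ξ η` are the paper's formulas for `a₂` and `a₁` at
`(ξ - η + 1, ξ + η + 1)` without the factor `(1 + m²)^(-(ξ + η)/2)`. -/
noncomputable def closedA2 (ξ η : ℕ) : ℝ :=
  (-1) ^ (ξ + 1) *
    ((1 + m ^ 2) ^ (ξ * η % 2) * zchooseSum (1 - (1 + m ^ 2) ^ 2) ((η : ℤ) / 2) (ξ / 2)
      - (1 + m ^ 2) ^ (ξ * (η + 1) % 2)
          * zchooseSum (1 - (1 + m ^ 2) ^ 2) (((η : ℤ) - 1) / 2) (ξ / 2))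

noncomputable def closedA1 (ξ η : ℕ) : ℝ :=
  (-1) ^ (ξ + 1) * m * (1 + m ^ 2) ^ (ξ * (η + 1) % 2)
    * zchooseSum (1 - (1 + m ^ 2) ^ 2) (((η : ℤ) - 1) / 2) (ξ / 2)

lemma closedA1_succ_right (ξ η : ℕ) :
    closedA1 m ξ (η + 1) = closedA1 m ξ η + m * closedA2 m ξ η := by
  have hη : (((η + 1 : ℕ) : ℤ) - 1) / 2 = (η : ℤ) / 2 := by omega
  have hexp : ξ * (η + 1 + 1) % 2 = ξ * η % 2 := by
    rw [show ξ * (η + 1 + 1) = ξ * η + 2 * ξ by ring, Nat.add_mul_mod_self_left]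
  rw [closedA1, closedA1, closedA2, hη, hexp]
  ring

lemma closedA2_succ_left (ξ η : ℕ) :
    closedA2 m (ξ + 1) η = -(-1) ^ η * (closedA2 m ξ η - m * closedA1 m ξ η) := by
  set q := 1 + m ^ 2
  set S := zchooseSum (1 - q ^ 2)
  have key : q ^ ((ξ + 1) * η % 2) * S (η / 2) ((ξ + 1) / 2)
        - q ^ ((ξ + 1) * (η + 1) % 2) * S ((η - 1) / 2) ((ξ + 1) / 2)
      = (-1) ^ η * (q ^ (ξ * η % 2) * S (η / 2) (ξ / 2)
        - q ^ (ξ * (η + 1) % 2) * q * S ((η - 1) / 2) (ξ / 2)) := by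
    simp only [pow_mod_two_eq_ite, Nat.even_mul, Nat.even_add_one]
    rcases Nat.even_or_odd ξ with hξ | hξ <;> rcases Nat.even_or_odd η with hη | hη
    · have hg : (ξ + 1) / 2 = ξ / 2 := by have := Nat.even_iff.mp hξ; omega
      simp [hξ, hη, hη.neg_one_pow, hg]
    · have hg : (ξ + 1) / 2 = ξ / 2 := by have := Nat.even_iff.mp hξ; omega
      have ha : ((η : ℤ) - 1) / 2 = η / 2 := by have := Nat.odd_iff.mp hη; omega
      simp [hξ, Nat.not_even_iff_odd.mpr hη, hη.neg_one_pow, hg, ha]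
    · have hg : (ξ + 1) / 2 = ξ / 2 + 1 := by have := Nat.odd_iff.mp hξ; omega
      have ha : (η : ℤ) / 2 = ((η : ℤ) - 1) / 2 + 1 := by have := Nat.even_iff.mp hη; omega
      simp [Nat.not_even_iff_odd.mpr hξ, hη, hη.neg_one_pow, hg, ha]
      linear_combination zchooseSum_mixed_diff (1 - q ^ 2) (((η : ℤ) - 1) / 2) (ξ / 2)
    · have hg : (ξ + 1) / 2 = ξ / 2 + 1 := by have := Nat.odd_iff.mp hξ; omega
      have ha : ((η : ℤ) - 1) / 2 = η / 2 := by have := Nat.odd_iff.mp hη; omega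
      simp [Nat.not_even_iff_odd.mpr hξ, Nat.not_even_iff_odd.mpr hη, hη.neg_one_pow, hg, ha]
  have hm : m ^ 2 = q - 1 := by ring
  simp only [closedA2, closedA1]
  linear_combination (-1) ^ (ξ + 2) * key
    + (-1) ^ (ξ + 1 + η) * q ^ (ξ * (η + 1) % 2) * S ((η - 1) / 2) (ξ / 2) * hm

lemma closedA1_zero_right (ξ : ℕ) : closedA1 m ξ 0 = 0 := by
  simp [closedA1, zchooseSum_of_neg]

lemma closedA2_zero_zero : closedA2 m 0 0 = -1 := by
  simp [closedA2, zchooseSum_of_neg, zchooseSum_zero_right]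

lemma closedA2_zero_succ (η : ℕ) : closedA2 m 0 (η + 1) = 0 := by
  have ha : (0 : ℤ) ≤ ((η + 1 : ℕ) : ℤ) / 2 := by omega
  have hb : (0 : ℤ) ≤ (((η + 1 : ℕ) : ℤ) - 1) / 2 := by omega
  simp only [closedA2, zchooseSum_zero_right _ ha, zchooseSum_zero_right _ hb, zero_mul,
    Nat.zero_mod, sub_self, mul_zero]

end ClosedForm

section Paths

variable {n : ℕ}

lemma extd_snoc (e : Fin n → Bool) (b : Bool) (k : ℕ) :
    extd (Fin.snoc e b : Fin (n + 1) → Bool) k = if k = n then b else extd e k := by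
  rcases lt_trichotomy k n with h | rfl | h
  · simp [extd, h, Nat.lt_succ_of_lt h, h.ne, Fin.snoc, Fin.castLT]
  · simp [extd, Fin.snoc]
  · simp [extd, h.ne', h.not_gt, (Nat.succ_le_of_lt h).not_gt]

lemma pathPos_succ (d : Fin n → Bool) (k : ℕ) :
    pathPos d (k + 1) = pathPos d k + dirZ (extd d k) :=
  sum_range_succ _ k

lemma pathPos_snoc_of_le (e : Fin n → Bool) (b : Bool) {k : ℕ} (hk : k ≤ n) :
    pathPos (Fin.snoc e b : Fin (n + 1) → Bool) k = pathPos e k :=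
  sum_congr rfl fun i hi => by rw [extd_snoc, if_neg (by simp at hi; omega)]

lemma pathPos_snoc (e : Fin n → Bool) (b : Bool) :
    pathPos (Fin.snoc e b : Fin (n + 1) → Bool) (n + 1) = pathPos e n + dirZ b := by
  rw [pathPos_succ, pathPos_snoc_of_le e b le_rfl, extd_snoc, if_pos rfl]

lemma pathTurns_snoc (e : Fin n → Bool) (b : Bool) (hn : 1 ≤ n) :
    pathTurns (Fin.snoc e b : Fin (n + 1) → Bool)
      = pathTurns e + if extd e (n - 1) = b then 0 else 1 := by
  rw [pathTurns, pathTurns, range_add_one, filter_insert]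
  have hlast : (0 < n ∧ extd (Fin.snoc e b : Fin (n + 1) → Bool) (n - 1)
      ≠ extd (Fin.snoc e b : Fin (n + 1) → Bool) n) ↔ extd e (n - 1) ≠ b := by
    rw [extd_snoc, extd_snoc, if_neg (by omega), if_pos rfl]
    exact and_iff_right (by omega)
  rw [filter_congr fun k hk => by
    rw [extd_snoc, extd_snoc, if_neg (by simp at hk; omega), if_neg (by simp at hk; omega)]]
  by_cases hb : extd e (n - 1) = b
  · rw [if_neg (by rwa [hlast, not_not]), if_pos hb, add_zero]
  · rw [if_pos (hlast.mpr hb), if_neg hb, card_insert_of_notMem (by simp)]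

lemma pathPos_le (d : Fin n → Bool) (k : ℕ) : pathPos d k ≤ k := by
  induction k with
  | zero => simp [pathPos]
  | succ k ih =>
    have : dirZ (extd d k) ≤ 1 := by unfold dirZ; split_ifs <;> omega
    rw [pathPos_succ]
    push_cast
    omega

lemma two_sub_le_pathPos (d : Fin n → Bool) (hd : extd d 0 = true) {k : ℕ} (hk : 1 ≤ k) :
    2 - (k : ℤ) ≤ pathPos d k := by
  induction k, hk using Nat.le_induction with
  | base => simp [pathPos, hd, dirZ]
  | succ k _ ih =>
    have : -1 ≤ dirZ (extd d k) := by unfold dirZ; split_ifs <;> omega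
    rw [pathPos_succ]
    push_cast
    omega

end Paths

section PathSums

variable (m : ℝ) (u : ℝ → ℝ → ℝ) {n : ℕ}

noncomputable def pathWeight (d : Fin n → Bool) : ℂ :=
  (-Complex.I * m) ^ pathTurns d *
    ∏ k ∈ range n, (u (pathPos d k + (dirZ (extd d k) : ℝ) / 2) (k + 1 / 2) : ℂ)

lemma pathWeight_snoc (hn : 1 ≤ n) (e : Fin n → Bool) (b : Bool) :
    pathWeight m u (Fin.snoc e b : Fin (n + 1) → Bool)
      = pathWeight m u e * (if extd e (n - 1) = b then 1 else -Complex.I * m)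
        * u (pathPos e n + (dirZ b : ℝ) / 2) (n + 1 / 2) := by
  have hprefix : ∀ k ∈ range n,
      (u (pathPos (Fin.snoc e b : Fin (n + 1) → Bool) k
          + (dirZ (extd (Fin.snoc e b : Fin (n + 1) → Bool) k) : ℝ) / 2) (k + 1 / 2) : ℂ)
        = u (pathPos e k + (dirZ (extd e k) : ℝ) / 2) (k + 1 / 2) := fun k hk => by
    rw [pathPos_snoc_of_le e b (mem_range.mp hk).le, extd_snoc, if_neg (mem_range.mp hk).ne]
  rw [pathWeight, pathWeight, pathTurns_snoc e b hn, pow_add, prod_range_succ,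
    prod_congr rfl hprefix, pathPos_snoc_of_le e b le_rfl, extd_snoc, if_pos rfl]
  split_ifs <;> ring

noncomputable def pathSum (n : ℕ) (x : ℤ) (b : Bool) : ℂ :=
  ∑ d : Fin n → Bool,
    if extd d 0 = true ∧ pathPos d n = x ∧ extd d (n - 1) = b then pathWeight m u d else 0

lemma sum_pathWeight_mul_eq (n : ℕ) (x : ℤ) (g : Bool → ℂ) :
    ∑ d : Fin n → Bool,
        (if extd d 0 = true ∧ pathPos d n = x then pathWeight m u d * g (extd d (n - 1)) else 0)
      = g true * pathSum m u n x true + g false * pathSum m u n x false := by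
  rw [pathSum, pathSum, mul_sum, mul_sum, ← sum_add_distrib]
  refine sum_congr rfl fun d _ => ?_
  cases extd d (n - 1) <;> split_ifs <;> simp_all [mul_comm]

lemma pathSum_succ_eq_sum_snoc (hn : 1 ≤ n) (x : ℤ) (b : Bool) :
    pathSum m u (n + 1) x b = ∑ e : Fin n → Bool,
      if extd e 0 = true ∧ pathPos e n = x - dirZ b
      then pathWeight m u (Fin.snoc e b : Fin (n + 1) → Bool) else 0 := by
  have h0 : 0 ≠ n := by omega
  have happly : ∀ p : Bool × (Fin n → Bool),
      (Fin.snocEquiv fun _ => Bool) p = Fin.snoc p.2 p.1 := fun _ => rfl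
  rw [pathSum, ← (Fin.snocEquiv fun _ => Bool).sum_comp, Fintype.sum_prod_type,
    Fintype.sum_eq_single b]
  · refine sum_congr rfl fun e _ => ?_
    simp only [happly, extd_snoc, pathPos_snoc, if_neg h0, add_tsub_cancel_right,
      ↓reduceIte, and_true, eq_sub_iff_add_eq]
  · intro b' hb'
    refine sum_eq_zero fun e _ => if_neg ?_
    simp [happly, extd_snoc, hb']

lemma pathSum_succ (hn : 1 ≤ n) (x : ℤ) (b : Bool) :
    pathSum m u (n + 1) x b
      = u (↑(x - dirZ b) + (dirZ b : ℝ) / 2) (n + 1 / 2)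
        * (pathSum m u n (x - dirZ b) b + (-Complex.I * m) * pathSum m u n (x - dirZ b) !b) := by
  set turn : Bool → ℂ := fun b' => if b' = b then 1 else -Complex.I * m
  have hterm : ∀ e : Fin n → Bool,
      (if extd e 0 = true ∧ pathPos e n = x - dirZ b
        then pathWeight m u (Fin.snoc e b : Fin (n + 1) → Bool) else 0)
      = (if extd e 0 = true ∧ pathPos e n = x - dirZ b
          then pathWeight m u e * turn (extd e (n - 1)) else 0)
        * u (↑(x - dirZ b) + (dirZ b : ℝ) / 2) (n + 1 / 2) := by
    intro e
    split_ifs with h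
    · rw [pathWeight_snoc m u hn, h.2]
    · rw [zero_mul]
  rw [pathSum_succ_eq_sum_snoc m u hn, sum_congr rfl fun e _ => hterm e, ← sum_mul,
    sum_pathWeight_mul_eq m u n _ turn]
  cases b <;> simp only [turn, Bool.not_false, Bool.not_true, ↓reduceIte, reduceCtorEq] <;> ring

lemma pathSum_eq_zero_of_lt {x : ℤ} (hx : (n : ℤ) < x) (b : Bool) : pathSum m u n x b = 0 :=
  sum_eq_zero fun d _ => if_neg fun h => by have := pathPos_le d n; omega

lemma pathSum_eq_zero_of_lt_two_sub (hn : 1 ≤ n) {x : ℤ} (hx : x < 2 - n) (b : Bool) :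
    pathSum m u n x b = 0 :=
  sum_eq_zero fun d _ => if_neg fun h => by have := two_sub_le_pathPos d h.1 hn; omega

lemma pathSum_succ_true_eq_zero (hn : 1 ≤ n) {x : ℤ} (hx : x ≤ 1 - n) :
    pathSum m u (n + 1) x true = 0 := by
  rw [pathSum_succ m u hn, pathSum_eq_zero_of_lt_two_sub m u hn (by simp [dirZ]; omega),
    pathSum_eq_zero_of_lt_two_sub m u hn (by simp [dirZ]; omega)]
  ring

lemma pathSum_succ_false_eq_zero (hn : 1 ≤ n) {x : ℤ} (hx : n + 1 ≤ x) :
    pathSum m u (n + 1) x false = 0 := by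
  rw [pathSum_succ m u hn, pathSum_eq_zero_of_lt m u (by simp [dirZ]; omega),
    pathSum_eq_zero_of_lt m u (by simp [dirZ]; omega)]
  ring

lemma pathSum_one_true : pathSum m u 1 1 true = u (1 / 2) (1 / 2) := by
  rw [pathSum, Fintype.sum_eq_single fun _ => true]
  · have hturns : pathTurns (fun _ => true : Fin 1 → Bool) = 0 := by decide
    simp [pathWeight, hturns, pathPos, extd, dirZ]
  · intro d hd
    refine if_neg fun h => hd (funext fun i => ?_)
    simpa [extd, Subsingleton.elim i 0] using h.1

lemma pathSum_one_false (x : ℤ) : pathSum m u 1 x false = 0 :=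
  sum_eq_zero fun d _ => if_neg fun h => by simp [h.1] at h

lemma kwf_one_eq_pathSum (x : ℤ) (n : ℕ) :
    kwf m 1 u x n = ((1 + m ^ 2) ^ ((1 - n : ℝ) / 2) : ℝ) * Complex.I
      * (pathSum m u n x true + pathSum m u n x false) := by
  have h := sum_pathWeight_mul_eq m u n x fun _ => 1
  rw [kwf, show ⌊(n : ℝ) / 1⌋.toNat = n by simp, show ⌊(x : ℝ) / 1⌋ = x by simp]
  simp only [div_one, one_pow, mul_one, one_mul, Complex.ofReal_one, sum_filter] at h ⊢
  rw [← h]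
  rfl

end PathSums

lemma uhom_one_of_sub_eq_two_mul {X T : ℝ} {k : ℕ} (h : T - X = 2 * k) :
    uhom 1 X T = -(-1) ^ k := by
  rw [uhom, h]
  rcases Nat.even_or_odd' k with ⟨j, rfl | rfl⟩
  · rw [if_pos ⟨j, by push_cast; ring⟩, pow_mul]
    simp
  · rw [if_neg, pow_succ, pow_mul]
    · simp
    · rintro ⟨c, hc⟩
      have : ((2 * (2 * j + 1) : ℤ) : ℝ) = ((4 * c : ℤ) : ℝ) := by
        push_cast at hc ⊢
        linarith
      have := Int.cast_injective this
      omega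

lemma uhom_one_of_sub_eq_two_mul_add_one {X T : ℝ} {k : ℤ} (h : T - X = 2 * k + 1) :
    uhom 1 X T = 1 := by
  rw [uhom, h, if_neg]
  rintro ⟨c, hc⟩
  have : ((2 * k + 1 : ℤ) : ℝ) = ((4 * c : ℤ) : ℝ) := by push_cast; linarith
  have := Int.cast_injective this
  omega

section HomogeneousField

variable (m : ℝ)

lemma pathSum_uhom_succ_true (ξ η : ℕ) :
    pathSum m (uhom 1) (ξ + η + 2) ((ξ + 1 : ℕ) - η + 1) true
      = -(-1) ^ η * (pathSum m (uhom 1) (ξ + η + 1) (ξ - η + 1) true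
        - Complex.I * m * pathSum m (uhom 1) (ξ + η + 1) (ξ - η + 1) false) := by
  have hx : ((ξ + 1 : ℕ) : ℤ) - η + 1 - dirZ true = ξ - η + 1 := by simp [dirZ]; ring
  rw [pathSum_succ m _ (by omega), hx, Bool.not_true,
    uhom_one_of_sub_eq_two_mul (k := η) (by simp [dirZ]; ring)]
  push_cast
  ring

lemma pathSum_uhom_succ_false (ξ η : ℕ) :
    pathSum m (uhom 1) (ξ + η + 2) (ξ - (η + 1 : ℕ) + 1) false
      = pathSum m (uhom 1) (ξ + η + 1) (ξ - η + 1) false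
        - Complex.I * m * pathSum m (uhom 1) (ξ + η + 1) (ξ - η + 1) true := by
  have hx : (ξ : ℤ) - (η + 1 : ℕ) + 1 - dirZ false = ξ - η + 1 := by simp [dirZ]; ring
  rw [pathSum_succ m _ (by omega), hx, Bool.not_false,
    uhom_one_of_sub_eq_two_mul_add_one (k := η) (by simp [dirZ]; ring)]
  push_cast
  ring

theorem pathSum_uhom (ξ η : ℕ) :
    pathSum m (uhom 1) (ξ + η + 1) (ξ - η + 1) true = closedA2 m ξ η ∧
      pathSum m (uhom 1) (ξ + η + 1) (ξ - η + 1) false = -Complex.I * closedA1 m ξ η := by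
  induction hn : ξ + η generalizing ξ η with
  | zero =>
    obtain ⟨rfl, rfl⟩ : ξ = 0 ∧ η = 0 := by omega
    norm_num [pathSum_one_true, pathSum_one_false, closedA2_zero_zero, closedA1_zero_right,
      uhom_one_of_sub_eq_two_mul (k := 0)]
  | succ n ih =>
    refine ⟨?_, ?_⟩
    · cases ξ with
      | zero =>
        obtain rfl : η = n + 1 := by omega
        rw [closedA2_zero_succ, pathSum_succ_true_eq_zero m _ (by omega) (by simp),
          Complex.ofReal_zero]
      | succ ξ =>
        obtain ⟨h2, h1⟩ := ih ξ η (by omega)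
        rw [show n + 1 = ξ + η + 1 by omega] at h2 h1
        rw [show n + 1 + 1 = ξ + η + 2 by omega, pathSum_uhom_succ_true, h2, h1,
          closedA2_succ_left]
        push_cast
        linear_combination (-(-1) ^ η * m * closedA1 m ξ η : ℂ) * Complex.I_sq
    · cases η with
      | zero =>
        obtain rfl : ξ = n + 1 := by omega
        rw [closedA1_zero_right, pathSum_succ_false_eq_zero m _ (by omega) (by simp),
          Complex.ofReal_zero, mul_zero]
      | succ η =>
        obtain ⟨h2, h1⟩ := ih ξ η (by omega)
        rw [show n + 1 = ξ + η + 1 by omega] at h2 h1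
        rw [show n + 1 + 1 = ξ + η + 2 by omega, pathSum_uhom_succ_false, h2, h1,
          closedA1_succ_right]
        push_cast
        ring

end HomogeneousField

lemma sum_sub_mul_zchoose (z x y : ℝ) (a b : ℤ) (g : ℕ) :
    ∑ j ∈ range (g + 1),
        ((zchoose a j : ℝ) * x - (zchoose b j : ℝ) * y) * (zchoose g j : ℝ) * z ^ j
      = x * zchooseSum z a g - y * zchooseSum z b g := by
  simp only [zchooseSum, mul_sum, ← sum_sub_distrib, zchoose_natCast]
  exact sum_congr rfl fun j _ => by push_cast; ring

lemma Int.floor_div_two (a : ℝ) : ⌊a / 2⌋ = ⌊a⌋ / 2 := by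
  exact_mod_cast Int.floor_div_natCast a 2

theorem exact_solution_a2_general (m : ℝ) (ξ η : ℕ) :
    ka2 m 1 (uhom 1) ((ξ : ℝ) - η + 1) ((ξ : ℝ) + η + 1)
      = ((-1 : ℝ) ^ (ξ + 1) / (1 + m ^ 2) ^ (((ξ : ℝ) + η) / 2))
        * ∑ j ∈ Finset.range (ξ / 2 + 1),
            ((zchoose ⌊(η : ℝ) / 2⌋ (j : ℤ) : ℝ) * (1 + m ^ 2) ^ ((ξ * η) % 2)
              - (zchoose ⌊((η : ℝ) - 1) / 2⌋ (j : ℤ) : ℝ) * (1 + m ^ 2) ^ ((ξ * (η + 1)) % 2))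
              * (zchoose ((ξ : ℤ) / 2) (j : ℤ) : ℝ) * (1 - (1 + m ^ 2) ^ 2) ^ j := by
  obtain ⟨h2, h1⟩ := pathSum_uhom m ξ η
  have hx : (ξ : ℝ) - η + 1 = ((ξ - η + 1 : ℤ) : ℝ) := by push_cast; ring
  have ht : (ξ : ℝ) + η + 1 = ((ξ + η + 1 : ℕ) : ℝ) := by push_cast; ring
  have hpow : (1 + m ^ 2) ^ ((1 - ((ξ + η + 1 : ℕ) : ℝ)) / 2)
      = ((1 + m ^ 2) ^ (((ξ : ℝ) + η) / 2))⁻¹ := by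
    rw [← Real.rpow_neg (by positivity)]
    push_cast
    ring_nf
  have him : ∀ c a b : ℝ, ((c : ℂ) * Complex.I * (a + -Complex.I * b)).im = c * a := by
    intro c a b
    simp
  rw [ka2, hx, ht, kwf_one_eq_pathSum, h2, h1, him, hpow, Int.floor_div_two, Int.floor_div_two,
    Int.floor_natCast, Int.floor_sub_one, Int.floor_natCast,
    show (ξ : ℤ) / 2 = (ξ / 2 : ℕ) by omega, sum_sub_mul_zchoose, closedA2]
  ring

/-- Proposition (exact solution, second component). -/
theorem exact_solution_a2 (m : ℝ) (hm : 0 ≤ m) (ξ η : ℕ) :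
    ka2 m 1 (uhom 1) ((ξ : ℝ) - η + 1) ((ξ : ℝ) + η + 1)
      = ((-1 : ℝ) ^ (ξ + 1) / (1 + m ^ 2) ^ (((ξ : ℝ) + η) / 2))
        * ∑ j ∈ Finset.range (ξ / 2 + 1),
            ((zchoose ⌊(η : ℝ) / 2⌋ (j : ℤ) : ℝ) * (1 + m ^ 2) ^ ((ξ * η) % 2)
              - (zchoose ⌊((η : ℝ) - 1) / 2⌋ (j : ℤ) : ℝ) * (1 + m ^ 2) ^ ((ξ * (η + 1)) % 2))
              * (zchoose ((ξ : ℤ) / 2) (j : ℤ) : ℝ) * (1 - (1 + m ^ 2) ^ 2) ^ j :=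
  exact_solution_a2_general m ξ η
end

section
/- For each real m ≥ 0 and all integers ξ ≥ 0, η ≥ 1: a₁(ξ−η+1, ξ+η+1, m, 1, u₁) = (−1)^{ξ+1} · m · (1+m²)^{δ₂((1+η)ξ)} · (1+m²)^{−(ξ+η)/2} · C(⌊ξ/2⌋+⌊(η−1)/2⌋, ⌊ξ/2⌋) · ₂F₁( −⌊(η−1)/2⌋, −⌊ξ/2⌋; −⌊ξ/2⌋−⌊(η−1)/2⌋; (1+m²)² ). -/
open scoped BigOperators

/-!
With `ε = 1`, splitting the checker paths according to their last move shows that the path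
sums satisfy the Dirac equation in the field `u₁`. On the light cone `x = ξ - η + 1`,
`t = ξ + η + 1` it becomes a recursion: `a₁` at `(ξ, η + 1)` is `a₁ + m a₂` at `(ξ, η)`, and
`a₂` at `(ξ + 1, η)` is `a₂ - m a₁` at `(ξ, η)` times the field value `(-1)^(η+1)`. The closed
form satisfies the same recursion and boundary values: after splitting by the parities of `ξ`
and `η` this reduces to the contiguous relation
`P(a+1, b+1) - P(a+1, b) = P(a, b+1) - z P(a, b)` for `P(A, B) = C(A+B, A) ₂F₁(-B, -A; -A-B; z)`,
a double Pascal identity on the coefficients of `P`.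
-/

namespace FeynmanCheckers

open Complex

/-- Written with `C(A+B-k, B)` rather than `C(A+B-k, A-k)` so that it vanishes for `k > A`. -/
def hypCoeff (A B k : ℕ) : ℕ := B.choose k * (A + B - k).choose B

/-- `C(A+B, A) · ₂F₁(-B, -A; -A-B; z)`, see `choose_mul_hypF`. -/
def hypPoly {R : Type*} [CommRing R] (z : R) (A B : ℕ) : R :=
  ∑ k ∈ Finset.range (A + 1), (-z) ^ k * hypCoeff A B k

lemma hypCoeff_succ_succ_zero (a b : ℕ) :
    hypCoeff (a + 1) (b + 1) 0 = hypCoeff (a + 1) b 0 + hypCoeff a (b + 1) 0 := by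
  simp only [hypCoeff, Nat.choose_zero_right, one_mul, Nat.sub_zero]
  rw [show a + 1 + (b + 1) = (a + b + 1) + 1 by ring, Nat.choose_succ_succ',
    show a + 1 + b = a + b + 1 by ring, show a + (b + 1) = a + b + 1 by ring]

lemma hypCoeff_succ_succ_succ {a j : ℕ} (hj : j ≤ a) (b : ℕ) :
    hypCoeff (a + 1) (b + 1) (j + 1) =
      hypCoeff (a + 1) b (j + 1) + hypCoeff a (b + 1) (j + 1) + hypCoeff a b j := by
  obtain ⟨r, rfl⟩ := Nat.exists_eq_add_of_le hj
  simp only [hypCoeff]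
  rw [show j + r + 1 + (b + 1) - (j + 1) = (r + b) + 1 by omega,
    show j + r + 1 + b - (j + 1) = r + b by omega, show j + r + (b + 1) - (j + 1) = r + b by omega,
    show j + r + b - j = r + b by omega, Nat.choose_succ_succ' (r + b), Nat.choose_succ_succ' b]
  ring

lemma hypCoeff_succ_self (a b : ℕ) : hypCoeff a b (a + 1) = 0 := by
  rcases b with _ | b
  · simp [hypCoeff]
  · exact Nat.mul_eq_zero.2 (Or.inr (Nat.choose_eq_zero_of_lt (by omega)))

section HypPoly

variable {R : Type*} [CommRing R] (z : R)

lemma hypPoly_zero_left (B : ℕ) : hypPoly z 0 B = 1 := by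
  simp [hypPoly, hypCoeff]

lemma hypPoly_zero_right (A : ℕ) : hypPoly z A 0 = 1 := by
  rw [hypPoly, Finset.sum_range_succ']
  simp [hypCoeff]

lemma hypPoly_eq_sum_range_succ_succ (a B : ℕ) :
    hypPoly z a B = ∑ k ∈ Finset.range (a + 2), (-z) ^ k * hypCoeff a B k := by
  rw [Finset.sum_range_succ, hypCoeff_succ_self, Nat.cast_zero, mul_zero, add_zero, hypPoly]

lemma hypPoly_succ_succ (a b : ℕ) :
    hypPoly z (a + 1) (b + 1) - hypPoly z (a + 1) b =
      hypPoly z a (b + 1) - z * hypPoly z a b := by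
  have hterm : ∀ j ∈ Finset.range (a + 1),
      (-z) ^ (j + 1) * (hypCoeff (a + 1) (b + 1) (j + 1) : R) =
        (-z) ^ (j + 1) * (hypCoeff (a + 1) b (j + 1) : R) +
          (-z) ^ (j + 1) * (hypCoeff a (b + 1) (j + 1) : R) - z * ((-z) ^ j * hypCoeff a b j) :=
    fun j hj => by
      rw [hypCoeff_succ_succ_succ (Nat.lt_succ_iff.1 (Finset.mem_range.1 hj))]
      push_cast
      ring
  rw [hypPoly, Finset.sum_range_succ', Finset.sum_congr rfl hterm, hypCoeff_succ_succ_zero,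
    hypPoly, Finset.sum_range_succ' _ (a + 1), hypPoly_eq_sum_range_succ_succ z a (b + 1),
    Finset.sum_range_succ' _ (a + 1), hypPoly, Finset.mul_sum, Finset.sum_sub_distrib,
    Finset.sum_add_distrib]
  push_cast
  ring

end HypPoly

lemma choose_mul_sub_eq_choose_succ_mul (B k : ℕ) :
    (B.choose k : ℤ) * (B - k) = B.choose (k + 1) * (k + 1) := by
  rcases le_or_gt k B with hk | hk
  · have h := Nat.choose_succ_right_eq B k
    zify [hk] at h
    exact h.symm
  · simp [Nat.choose_eq_zero_of_lt hk, Nat.choose_eq_zero_of_lt (Nat.lt_succ_of_lt hk)]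

lemma hypCoeff_mul_eq_hypCoeff_succ_mul {A k : ℕ} (hk : k < A) (B : ℕ) :
    (hypCoeff A B k : ℤ) * ((B - k) * (A - k)) =
      hypCoeff A B (k + 1) * ((k + 1) * (A + B - k)) := by
  have hright :
      ((A + B - k).choose B : ℤ) * (A - k) = (A + B - (k + 1)).choose B * (A + B - k) := by
    have h := Nat.choose_mul_succ_eq (A + B - (k + 1)) B
    rw [show A + B - (k + 1) + 1 = A + B - k by omega, show A + B - k - B = A - k by omega] at h
    zify [hk.le, (by omega : k ≤ A + B)] at h
    linear_combination -h
  simp only [hypCoeff, Nat.cast_mul]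
  linear_combination
    ((A + B - k).choose B : ℤ) * (A - k) * choose_mul_sub_eq_choose_succ_mul B k +
      (B.choose (k + 1) * (k + 1) : ℤ) * hright

lemma choose_mul_prod_hypF_ratio (A B : ℕ) {k : ℕ} (hk : k ≤ A) :
    ((A + B).choose A : ℝ) * ∏ l ∈ Finset.range k,
        (((-(B : ℤ) + l) * (-(A : ℤ) + l) : ℤ) : ℝ) /
          (((1 + l) * (-(A : ℤ) - B + l) : ℤ) : ℝ) =
      (-1) ^ k * hypCoeff A B k := by
  induction k with
  | zero => simpa [hypCoeff] using Nat.choose_symm_add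
  | succ k ih =>
    have hkA : (k : ℝ) < A := by exact_mod_cast hk
    have hden : (1 + k) * (-(A : ℝ) - B + k) ≠ 0 := mul_ne_zero (by positivity) (by linarith)
    have hcoeff : (hypCoeff A B k : ℝ) * ((B - k) * (A - k)) =
        hypCoeff A B (k + 1) * ((k + 1) * (A + B - k)) := by
      exact_mod_cast hypCoeff_mul_eq_hypCoeff_succ_mul (show k < A by omega) B
    rw [Finset.prod_range_succ, ← mul_assoc, ih (by omega)]
    push_cast
    rw [mul_div_assoc', div_eq_iff hden]
    linear_combination (-1) ^ k * hcoeff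

lemma choose_mul_hypF (A B : ℕ) (z : ℝ) :
    ((A + B).choose A : ℝ) * hypF (-(B : ℤ)) (-(A : ℤ)) (-(A : ℤ) - B) A z =
      hypPoly z A B := by
  rw [hypF, hypPoly, Finset.mul_sum]
  refine Finset.sum_congr rfl fun k hk => ?_
  rw [← mul_assoc, choose_mul_prod_hypF_ratio A B (Nat.lt_succ_iff.1 (Finset.mem_range.1 hk)),
    neg_pow z, mul_comm ((-1 : ℝ) ^ k)]
  ring

section Snoc

variable {n : ℕ} (d : Fin n → Bool) (c : Bool)

lemma extd_snoc_of_lt {k : ℕ} (hk : k < n) :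
    extd (Fin.snoc d c : Fin (n + 1) → Bool) k = extd d k := by
  have : (⟨k, by omega⟩ : Fin (n + 1)) = Fin.castSucc ⟨k, hk⟩ := rfl
  rw [extd, dif_pos (by omega), this, Fin.snoc_castSucc, extd, dif_pos hk]

lemma extd_snoc_self : extd (Fin.snoc d c : Fin (n + 1) → Bool) n = c := by
  rw [extd, dif_pos n.lt_succ_self]
  exact Fin.snoc_last (α := fun _ => Bool) c d

lemma pathPos_snoc_of_le {k : ℕ} (hk : k ≤ n) :
    pathPos (Fin.snoc d c : Fin (n + 1) → Bool) k = pathPos d k :=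
  Finset.sum_congr rfl fun i hi => by rw [extd_snoc_of_lt d c (by simp at hi; omega)]

lemma pathPos_snoc_succ :
    pathPos (Fin.snoc d c : Fin (n + 1) → Bool) (n + 1) = pathPos d n + dirZ c := by
  rw [pathPos, Finset.sum_range_succ, extd_snoc_self, ← pathPos, pathPos_snoc_of_le d c le_rfl]

lemma pathTurns_snoc (hn : 1 ≤ n) :
    pathTurns (Fin.snoc d c : Fin (n + 1) → Bool) =
      pathTurns d + if extd d (n - 1) = c then 0 else 1 := by
  have hlast : extd (Fin.snoc d c : Fin (n + 1) → Bool) (n - 1) = extd d (n - 1) :=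
    extd_snoc_of_lt d c (by omega)
  have hprefix : ((Finset.range n).filter fun k =>
        0 < k ∧ extd (Fin.snoc d c : Fin (n + 1) → Bool) (k - 1) ≠ extd (Fin.snoc d c) k) =
      (Finset.range n).filter fun k => 0 < k ∧ extd d (k - 1) ≠ extd d k :=
    Finset.filter_congr fun k hk => by
      rw [extd_snoc_of_lt d c (by simp at hk; omega), extd_snoc_of_lt d c (by simpa using hk)]
  rw [pathTurns, Finset.range_add_one, Finset.filter_insert, hprefix, extd_snoc_self, hlast, pathTurns]
  split_ifs <;> simp_all [Finset.card_insert_of_notMem]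

end Snoc

/-- The value `±1` of the homogeneous field `u₁` on an auxiliary edge whose midpoint `(X, T)`
has `T - X = z`. -/
def fieldSign (z : ℤ) : ℝ := if 4 ∣ z then -1 else 1

lemma uhom_one_eq_fieldSign {X T : ℝ} {z : ℤ} (h : T - X = z) : uhom 1 X T = fieldSign z := by
  have : (∃ k : ℤ, T - X = 4 * 1 * k) ↔ 4 ∣ z := by
    simp only [h, mul_one]
    exact ⟨fun ⟨k, hk⟩ => ⟨k, by exact_mod_cast hk⟩,
      fun ⟨k, hk⟩ => ⟨k, by simp [hk]⟩⟩
  simp only [uhom, fieldSign, this]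

section PathSum

variable (m : ℝ) {n : ℕ}

noncomputable def pathWeight (d : Fin n → Bool) : ℂ :=
  (-I * m) ^ pathTurns d *
    ∏ k ∈ Finset.range n, ((uhom 1 (pathPos d k + dirZ (extd d k) / 2) (k + 1 / 2) : ℝ) : ℂ)

lemma pathWeight_snoc (hn : 1 ≤ n) (d : Fin n → Bool) (c : Bool) :
    pathWeight m (Fin.snoc d c : Fin (n + 1) → Bool) =
      pathWeight m d * (-I * m) ^ (if extd d (n - 1) = c then 0 else 1) *
        ((uhom 1 (pathPos d n + dirZ c / 2) (n + 1 / 2) : ℝ) : ℂ) := by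
  have hprefix : ∀ k ∈ Finset.range n,
      ((uhom 1 (pathPos (Fin.snoc d c : Fin (n + 1) → Bool) k +
          dirZ (extd (Fin.snoc d c : Fin (n + 1) → Bool) k) / 2) (k + 1 / 2) : ℝ) : ℂ) =
        ((uhom 1 (pathPos d k + dirZ (extd d k) / 2) (k + 1 / 2) : ℝ) : ℂ) := fun k hk => by
    rw [Finset.mem_range] at hk
    rw [extd_snoc_of_lt d c hk, pathPos_snoc_of_le d c hk.le]
  rw [pathWeight, pathWeight, pathTurns_snoc d c hn, Finset.prod_range_succ,
    Finset.prod_congr rfl hprefix, extd_snoc_self, pathPos_snoc_of_le d c le_rfl, pow_add]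
  ring

noncomputable def pathSum (n : ℕ) (x : ℤ) (b : Bool) : ℂ :=
  ∑ d ∈ Finset.univ.filter (fun d : Fin n → Bool =>
      (extd d 0 = true ∧ pathPos d n = x) ∧ extd d (n - 1) = b), pathWeight m d

lemma pathSum_one (x : ℤ) (b : Bool) :
    pathSum m 1 x b = if x = 1 ∧ b = true then -1 else 0 := by
  have hu : uhom 1 2⁻¹ 2⁻¹ = -1 := by
    rw [uhom_one_eq_fieldSign (z := 0) (by ring)]
    simp [fieldSign]
  rw [pathSum, Finset.sum_filter,
    ← (Equiv.funUnique (Fin 1) Bool).symm.sum_comp, Fintype.sum_bool]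
  rcases b <;> simp [extd, pathPos, pathWeight, pathTurns, dirZ, hu, Finset.filter_singleton,
    eq_comm (a := (1 : ℤ))]

lemma pathSum_succ (hn : 1 ≤ n) (x : ℤ) (b : Bool) :
    pathSum m (n + 1) x b = ((uhom 1 (x - dirZ b / 2) (n + 1 / 2) : ℝ) : ℂ) *
      (pathSum m n (x - dirZ b) b + (-I * m) * pathSum m n (x - dirZ b) (!b)) := by
  set U : ℂ := ((uhom 1 (x - dirZ b / 2) (n + 1 / 2) : ℝ) : ℂ)
  have hcond (d : Fin n → Bool) (c : Bool) :
      ((extd (Fin.snoc d c : Fin (n + 1) → Bool) 0 = true ∧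
          pathPos (Fin.snoc d c : Fin (n + 1) → Bool) (n + 1) = x) ∧
          extd (Fin.snoc d c : Fin (n + 1) → Bool) (n + 1 - 1) = b) ↔
        c = b ∧ (extd d 0 = true ∧ pathPos d n = x - dirZ b) := by
    rw [extd_snoc_of_lt d c (by omega), pathPos_snoc_succ, Nat.add_sub_cancel, extd_snoc_self]
    constructor
    · rintro ⟨⟨h0, hx⟩, rfl⟩
      exact ⟨rfl, h0, by omega⟩
    · rintro ⟨rfl, h0, hx⟩
      exact ⟨⟨h0, by omega⟩, rfl⟩
  have hterm (d : Fin n → Bool) :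
      (if extd d 0 = true ∧ pathPos d n = x - dirZ b then
          pathWeight m (Fin.snoc d b : Fin (n + 1) → Bool) else 0) =
        U * ((if (extd d 0 = true ∧ pathPos d n = x - dirZ b) ∧ extd d (n - 1) = b then
            pathWeight m d else 0) +
          (-I * m) * (if (extd d 0 = true ∧ pathPos d n = x - dirZ b) ∧ extd d (n - 1) = !b then
            pathWeight m d else 0)) := by
    by_cases hP : extd d 0 = true ∧ pathPos d n = x - dirZ b
    · have hU : ((uhom 1 (pathPos d n + dirZ b / 2) (n + 1 / 2) : ℝ) : ℂ) = U := by
        simp only [U, hP.2]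
        push_cast
        ring_nf
      rw [pathWeight_snoc m hn, hU]
      rcases b <;> rcases extd d (n - 1) <;> simp [hP] <;> ring
    · simp [hP]
  have hsnoc (p : Bool × (Fin n → Bool)) :
      (Fin.snocEquiv fun _ => Bool) p = (Fin.snoc p.2 p.1 : Fin (n + 1) → Bool) := rfl
  rw [pathSum, Finset.sum_filter, ← (Fin.snocEquiv fun _ => Bool).sum_comp, Fintype.sum_prod_type]
  simp only [hsnoc, hcond, ite_and (P := _ = b), Finset.sum_ite_irrel, Finset.sum_const_zero,
    Fintype.sum_ite_eq', hterm, ← Finset.mul_sum, Finset.sum_add_distrib]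
  rw [pathSum, pathSum, Finset.sum_filter, Finset.sum_filter]

end PathSum

/-- The unnormalized wave function `(a₁, a₂)` at time `n`, defined by the Dirac equation in the
field `u₁`. -/
noncomputable def amp (m : ℝ) : ℕ → ℤ → ℝ × ℝ
  | 0, _ => (0, 0)
  | 1, x => if x = 1 then (0, -1) else (0, 0)
  | n + 2, x =>
      (fieldSign (n + 1 - x) * ((amp m (n + 1) (x + 1)).1 + m * (amp m (n + 1) (x + 1)).2),
       fieldSign (n + 2 - x) * ((amp m (n + 1) (x - 1)).2 - m * (amp m (n + 1) (x - 1)).1))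

lemma amp_succ_succ (m : ℝ) (n : ℕ) (x : ℤ) :
    amp m (n + 2) x =
      (fieldSign (n + 1 - x) * ((amp m (n + 1) (x + 1)).1 + m * (amp m (n + 1) (x + 1)).2),
       fieldSign (n + 2 - x) * ((amp m (n + 1) (x - 1)).2 - m * (amp m (n + 1) (x - 1)).1)) :=
  rfl

lemma pathSum_eq_amp (m : ℝ) {n : ℕ} (hn : 1 ≤ n) (x : ℤ) :
    pathSum m n x true = (amp m n x).2 ∧ pathSum m n x false = -I * (amp m n x).1 := by
  induction n, hn using Nat.le_induction generalizing x with
  | base => rcases eq_or_ne x 1 with rfl | hx <;> simp [pathSum_one, amp, *]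
  | succ n hn ih =>
    obtain ⟨k, rfl⟩ : ∃ k, n = k + 1 := ⟨n - 1, by omega⟩
    simp only [pathSum_succ m hn, Bool.not_true, Bool.not_false, (ih _).1, (ih _).2]
    rw [uhom_one_eq_fieldSign (z := k + 2 - x), uhom_one_eq_fieldSign (z := k + 1 - x),
      amp_succ_succ]
    · simp only [dirZ, if_true, Bool.false_eq_true, if_false, sub_neg_eq_add]
      push_cast
      constructor
      · linear_combination (fieldSign (k + 2 - x) * m * (amp m (k + 1) (x - 1)).1 : ℂ) * I_sq
      · ring
    all_goals simp [dirZ]; ring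

lemma ka1_eq_amp (m : ℝ) {n : ℕ} (hn : 1 ≤ n) (x : ℤ) :
    ka1 m 1 (uhom 1) x n = (1 + m ^ 2) ^ ((1 - n : ℝ) / 2) * (amp m n x).1 := by
  have hpaths :
      ∑ d ∈ Finset.univ.filter (fun d : Fin n → Bool => extd d 0 = true ∧ pathPos d n = x),
        pathWeight m d = pathSum m n x true + pathSum m n x false := by
    rw [← Finset.sum_filter_add_sum_filter_not _ (fun d => extd d (n - 1) = true), pathSum,
      pathSum, Finset.filter_filter, Finset.filter_filter]
    simp only [Bool.not_eq_true]
  have hwf : kwf m 1 (uhom 1) x n = ((1 + m ^ 2) ^ ((1 - n : ℝ) / 2) : ℝ) * I *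
      (pathSum m n x true + pathSum m n x false) := by
    have htime : (⌊(n : ℝ) / 1⌋).toNat = n := by simp
    rw [← hpaths, kwf, htime]
    simp [pathWeight]
  rw [ka1, hwf, (pathSum_eq_amp m hn x).1, (pathSum_eq_amp m hn x).2]
  ring_nf
  simp [I_sq]

lemma fieldSign_two_mul_add_one (k : ℤ) : fieldSign (2 * k + 1) = 1 :=
  if_neg (by omega)

lemma fieldSign_two_mul (k : ℕ) : fieldSign (2 * k) = (-1) ^ (k + 1) := by
  rcases Nat.even_or_odd k with ⟨j, rfl⟩ | ⟨j, rfl⟩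
  · rw [fieldSign, if_pos ⟨j, by push_cast; ring⟩, pow_succ, Even.neg_one_pow ⟨j, rfl⟩]
    ring
  · rw [fieldSign, if_neg (by push_cast; omega), pow_succ, Odd.neg_one_pow ⟨j, rfl⟩]
    ring

lemma amp_eq_zero_of_outside_cone (m : ℝ) (n : ℕ) (x : ℤ) (hx : n < x ∨ x + n < 2) :
    amp m n x = (0, 0) := by
  induction n generalizing x with
  | zero => rfl
  | succ n ih =>
    rcases n with _ | n
    · exact if_neg (by omega)
    · rw [amp_succ_succ, ih (x + 1) (by omega), ih (x - 1) (by omega)]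
      simp

/-- Light-cone coordinates: `ξ` up-right and `η` up-left moves after the first move. -/
noncomputable def coneAmp (m : ℝ) (ξ η : ℕ) : ℝ × ℝ := amp m (ξ + η + 1) (ξ - η + 1)

lemma coneAmp_zero_right (m : ℝ) (ξ : ℕ) : coneAmp m ξ 0 = (0, (-1) ^ (ξ + 1)) := by
  induction ξ with
  | zero => simp [coneAmp, amp]
  | succ ξ ih =>
    have hout : amp m (ξ + 1) (ξ + 1 + 1 + 1) = (0, 0) :=
      amp_eq_zero_of_outside_cone m _ _ (by omega)
    have hsign : fieldSign (ξ + 2 - (ξ + 1 + 1)) = -1 := by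
      rw [show (ξ : ℤ) + 2 - (ξ + 1 + 1) = 0 by ring]
      simp [fieldSign]
    simp only [coneAmp, Nat.cast_add, Nat.cast_one, CharP.cast_eq_zero, sub_zero,
      add_zero] at ih ⊢
    rw [amp_succ_succ, add_sub_cancel_right, hout, ih, hsign]
    simp [pow_succ]

lemma coneAmp_zero_left_snd (m : ℝ) (η : ℕ) : (coneAmp m 0 (η + 1)).2 = 0 := by
  have hout : amp m (η + 1) (-η - 1) = (0, 0) := amp_eq_zero_of_outside_cone m _ _ (by omega)
  simp only [coneAmp, zero_add, CharP.cast_eq_zero, Nat.cast_add, Nat.cast_one]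
  rw [amp_succ_succ]
  simp [hout]

lemma coneAmp_fst_succ (m : ℝ) (ξ η : ℕ) :
    (coneAmp m ξ (η + 1)).1 = (coneAmp m ξ η).1 + m * (coneAmp m ξ η).2 := by
  simp only [coneAmp]
  rw [show ξ + (η + 1) + 1 = (ξ + η) + 2 by ring, amp_succ_succ,
    show ((ξ + η : ℕ) : ℤ) + 1 - (ξ - (η + 1 : ℕ) + 1) = 2 * η + 1 by push_cast; ring,
    fieldSign_two_mul_add_one, one_mul,
    show (ξ : ℤ) - (η + 1 : ℕ) + 1 + 1 = ξ - η + 1 by push_cast; ring]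

lemma coneAmp_snd_succ (m : ℝ) (ξ η : ℕ) :
    (coneAmp m (ξ + 1) η).2 =
      (-1) ^ (η + 1) * ((coneAmp m ξ η).2 - m * (coneAmp m ξ η).1) := by
  simp only [coneAmp]
  rw [show ξ + 1 + η + 1 = (ξ + η) + 2 by ring, amp_succ_succ,
    show ((ξ + η : ℕ) : ℤ) + 2 - ((ξ + 1 : ℕ) - η + 1) = 2 * (η : ℕ) by
      push_cast; ring,
    fieldSign_two_mul,
    show ((ξ + 1 : ℕ) : ℤ) - η + 1 - 1 = ξ - η + 1 by push_cast; ring]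

section ClosedForm

variable (m : ℝ)

/-- The right-hand side of the theorem without the factor `(1 + m²)^(-(ξ+η)/2)`. -/
noncomputable def a1Closed (ξ η : ℕ) : ℝ :=
  (-1) ^ (ξ + 1) * m * (1 + m ^ 2) ^ (((1 + η) * ξ) % 2) *
    hypPoly ((1 + m ^ 2) ^ 2) (ξ / 2) ((η - 1) / 2)

lemma a1Closed_even_odd (a b : ℕ) :
    a1Closed m (2 * a) (2 * b + 1) = -m * hypPoly ((1 + m ^ 2) ^ 2) a b := by
  have hpar : (1 + (2 * b + 1)) * (2 * a) % 2 = 0 := by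
    rw [show (1 + (2 * b + 1)) * (2 * a) = 2 * ((b + 1) * (2 * a)) by ring, Nat.mul_mod_right]
  simp [a1Closed, hpar, pow_succ, pow_mul]

lemma a1Closed_even_even (a b : ℕ) :
    a1Closed m (2 * a) (2 * b + 2) = -m * hypPoly ((1 + m ^ 2) ^ 2) a b := by
  have hpar : (1 + (2 * b + 2)) * (2 * a) % 2 = 0 := by
    rw [show (1 + (2 * b + 2)) * (2 * a) = 2 * ((2 * b + 3) * a) by ring, Nat.mul_mod_right]
  simp [a1Closed, hpar, pow_succ, pow_mul, show (2 * b + 1) / 2 = b by omega]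

lemma a1Closed_odd_odd (a b : ℕ) :
    a1Closed m (2 * a + 1) (2 * b + 1) = m * hypPoly ((1 + m ^ 2) ^ 2) a b := by
  have hpar : (1 + (2 * b + 1)) * (2 * a + 1) % 2 = 0 := by
    rw [show (1 + (2 * b + 1)) * (2 * a + 1) = 2 * ((b + 1) * (2 * a + 1)) by ring,
      Nat.mul_mod_right]
  simp [a1Closed, hpar, pow_succ, pow_mul, show (2 * a + 1) / 2 = a by omega]

lemma a1Closed_odd_even (a b : ℕ) :
    a1Closed m (2 * a + 1) (2 * b + 2) = m * (1 + m ^ 2) * hypPoly ((1 + m ^ 2) ^ 2) a b := by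
  have hpar : (1 + (2 * b + 2)) * (2 * a + 1) % 2 = 1 := by
    rw [show (1 + (2 * b + 2)) * (2 * a + 1) = 2 * (2 * a * b + 3 * a + b + 1) + 1 by ring,
      Nat.mul_add_mod]
  simp [a1Closed, hpar, pow_succ, pow_mul, show (2 * a + 1) / 2 = a by omega,
    show (2 * b + 1) / 2 = b by omega]

lemma a1Closed_zero_left (η : ℕ) : a1Closed m 0 η = -m := by
  simp [a1Closed, hypPoly_zero_left]

lemma a1Closed_one_right (ξ : ℕ) : a1Closed m ξ 1 = (-1) ^ (ξ + 1) * m := by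
  have hpar : (1 + 1) * ξ % 2 = 0 := Nat.mul_mod_right 2 ξ
  simp [a1Closed, hpar, hypPoly_zero_right]

/-- The closed form satisfies the recursion `coneAmp_snd_succ` of the second component. -/
lemma a1Closed_succ_sub (ξ j : ℕ) :
    a1Closed m (ξ + 1) (j + 2) - a1Closed m (ξ + 1) (j + 1) =
      (-1) ^ j * (a1Closed m ξ (j + 2) - (1 + m ^ 2) * a1Closed m ξ (j + 1)) := by
  obtain ⟨a, rfl | rfl⟩ := Nat.even_or_odd' ξ <;>
    obtain ⟨b, rfl | rfl⟩ := Nat.even_or_odd' j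
  · rw [a1Closed_odd_even, a1Closed_odd_odd, a1Closed_even_even, a1Closed_even_odd,
      (even_two_mul b).neg_one_pow]
    ring
  · rw [show 2 * b + 1 + 2 = 2 * (b + 1) + 1 by ring, show 2 * b + 1 + 1 = 2 * b + 2 by ring,
      a1Closed_odd_odd, a1Closed_odd_even, a1Closed_even_odd, a1Closed_even_even,
      (odd_two_mul_add_one b).neg_one_pow]
    ring
  · rw [show 2 * a + 1 + 1 = 2 * (a + 1) by ring, a1Closed_even_even, a1Closed_even_odd,
      a1Closed_odd_even, a1Closed_odd_odd, (even_two_mul b).neg_one_pow]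
    ring
  · rw [show 2 * a + 1 + 1 = 2 * (a + 1) by ring, show 2 * b + 1 + 2 = 2 * (b + 1) + 1 by ring,
      show 2 * b + 1 + 1 = 2 * b + 2 by ring, a1Closed_even_odd, a1Closed_even_even,
      a1Closed_odd_odd, a1Closed_odd_even, (odd_two_mul_add_one b).neg_one_pow]
    linear_combination -m * hypPoly_succ_succ ((1 + m ^ 2) ^ 2) a b

lemma coneAmp_fst_eq_a1Closed_of_snd {ξ : ℕ}
    (hsnd : ∀ j, m * (coneAmp m ξ (j + 1)).2 = a1Closed m ξ (j + 2) - a1Closed m ξ (j + 1))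
    (j : ℕ) :
    (coneAmp m ξ (j + 1)).1 = a1Closed m ξ (j + 1) := by
  induction j with
  | zero => simp [coneAmp_fst_succ, coneAmp_zero_right, a1Closed_one_right, mul_comm]
  | succ j ih => rw [coneAmp_fst_succ, ih, hsnd]; ring

lemma coneAmp_snd_eq_a1Closed (ξ j : ℕ) :
    m * (coneAmp m ξ (j + 1)).2 = a1Closed m ξ (j + 2) - a1Closed m ξ (j + 1) := by
  induction ξ generalizing j with
  | zero => simp [coneAmp_zero_left_snd, a1Closed_zero_left]
  | succ ξ ih =>
    rw [coneAmp_snd_succ, coneAmp_fst_eq_a1Closed_of_snd m ih, a1Closed_succ_sub, pow_succ,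
      pow_succ]
    linear_combination ((-1) ^ j : ℝ) * ih j

lemma coneAmp_fst_eq_a1Closed (ξ j : ℕ) : (coneAmp m ξ (j + 1)).1 = a1Closed m ξ (j + 1) :=
  coneAmp_fst_eq_a1Closed_of_snd m (coneAmp_snd_eq_a1Closed m ξ) j

end ClosedForm

end FeynmanCheckers

open FeynmanCheckers

theorem hypergeometric_formula_a1_general (m : ℝ) (ξ η : ℕ) (hη : 1 ≤ η) :
    ka1 m 1 (uhom 1) ((ξ : ℝ) - η + 1) ((ξ : ℝ) + η + 1)
      = (-1 : ℝ) ^ (ξ + 1) * m * (1 + m ^ 2) ^ ((((1 + η) * ξ) % 2))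
        * (1 + m ^ 2) ^ (-(((ξ : ℝ) + η) / 2))
        * (Nat.choose (ξ / 2 + (η - 1) / 2) (ξ / 2) : ℝ)
        * hypF (-(((η - 1) / 2 : ℕ) : ℤ)) (-((ξ / 2 : ℕ) : ℤ))
            (-((ξ / 2 : ℕ) : ℤ) - (((η - 1) / 2 : ℕ) : ℤ)) (ξ / 2) ((1 + m ^ 2) ^ 2) := by
  obtain ⟨j, rfl⟩ := Nat.exists_eq_add_of_le' hη
  have hx : (ξ : ℝ) - (j + 1 : ℕ) + 1 = ((ξ - (j + 1 : ℕ) + 1 : ℤ) : ℝ) := by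
    push_cast; ring
  have ht : (ξ : ℝ) + (j + 1 : ℕ) + 1 = ((ξ + (j + 1) + 1 : ℕ) : ℝ) := by push_cast; ring
  have hnorm : (1 - ((ξ + (j + 1) + 1 : ℕ) : ℝ)) / 2 = -((ξ + (j + 1 : ℕ) : ℝ) / 2) := by
    push_cast; ring
  rw [hx, ht, ka1_eq_amp m (by omega), hnorm]
  change _ * (coneAmp m ξ (j + 1)).1 = _
  rw [coneAmp_fst_eq_a1Closed, a1Closed, ← choose_mul_hypF]
  ring

/-- Lemma (hypergeometric closed formula for the first component of the exact solution). -/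
theorem hypergeometric_formula_a1 (m : ℝ) (hm : 0 ≤ m) (ξ η : ℕ) (hη : 1 ≤ η) :
    ka1 m 1 (uhom 1) ((ξ : ℝ) - η + 1) ((ξ : ℝ) + η + 1)
      = (-1 : ℝ) ^ (ξ + 1) * m * (1 + m ^ 2) ^ ((((1 + η) * ξ) % 2))
        * (1 + m ^ 2) ^ (-(((ξ : ℝ) + η) / 2))
        * (Nat.choose (ξ / 2 + (η - 1) / 2) (ξ / 2) : ℝ)
        * hypF (-(((η - 1) / 2 : ℕ) : ℤ)) (-((ξ / 2 : ℕ) : ℤ))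
            (-((ξ / 2 : ℕ) : ℤ) - (((η - 1) / 2 : ℕ) : ℤ)) (ξ / 2) ((1 + m ^ 2) ^ 2) :=
  hypergeometric_formula_a1_general m ξ η hη
end
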